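/- For every nonnegative integer n and real λ, the degenerate Bell numbers satisfy the recurrence Bel_{n+1,λ} = (n+1-nλ) Bel_{n,λ} - Σ_{m=0}^{n-1} C(n, m-1) Bel_{m,λ} (λ-1)_{n-m+1,λ} (with the convention C(n,-1)=0). -/
import Mathlib

open Finset

def degFall (l x : ℝ) (n : ℕ) : ℝ := ∏ i ∈ Finset.range n, (x - i * l)

def fall (x : ℝ) (n : ℕ) : ℝ := ∏ i ∈ Finset.range n, (x - i)

lemma fall_succ' (x : ℝ) (k : ℕ) : fall x (k+1) = x * fall (x-1) k := by
  rw [fall, Finset.prod_range_succ', fall]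
  have h0 : x - ((0:ℕ):ℝ) = x := by norm_num
  rw [h0, mul_comm]
  congr 1
  apply Finset.prod_congr rfl
  intro i _
  push_cast
  ring

lemma fall_zero_eq (k : ℕ) : fall 0 (k+1) = 0 := by
  rw [fall_succ']; ring

lemma fall_add_one (x : ℝ) (k : ℕ) : fall (x+1) (k+1) = (x+1) * fall x k := by
  simpa using fall_succ' (x+1) k

lemma degFall_succ (l y : ℝ) (j : ℕ) :
    degFall l y (j+1) = degFall l y j * (y - j * l) := by
  simp [degFall, Finset.prod_range_succ]

lemma degFall_succ' (l y : ℝ) (j : ℕ) : degFall l y (j+1) = y * degFall l (y - l) j := by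
  rw [degFall, Finset.prod_range_succ', degFall]
  have h0 : y - ((0:ℕ):ℝ) * l = y := by norm_num
  rw [h0, mul_comm]
  congr 1
  apply Finset.prod_congr rfl
  intro i _
  push_cast
  ring

lemma alt_sum_choose (N : ℕ) (h : N ≠ 0) :
    ∑ j ∈ range (N+1), (-1:ℝ)^(N-j) * (N.choose j) = 0 := by
  have key : ∀ j ∈ range (N+1), (-1:ℝ)^(N-j) * (N.choose j) = (-1)^N * ((-1)^j * (N.choose j)) := by
    intro j hj
    rw [Finset.mem_range] at hj
    rw [← mul_assoc, ← pow_add]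
    have : (-1:ℝ)^(N-j) = (-1)^(N+j) := by
      rw [show N + j = (N - j) + 2*j by omega, pow_add, pow_mul]
      norm_num
    rw [this]
  rw [Finset.sum_congr rfl key, ← Finset.mul_sum]
  have h2 := Int.alternating_sum_range_choose (n := N)
  rw [if_neg h] at h2
  have h3 : ∑ j ∈ range (N+1), (-1:ℝ)^j * (N.choose j) = 0 := by
    exact_mod_cast congrArg (fun z : ℤ => (z : ℝ)) h2
  rw [h3, mul_zero]

lemma A_eval (t : ℕ) : ∀ k : ℕ,
    ∑ j ∈ range (t+1), (-1:ℝ)^(t-j) * (t.choose j) * fall j k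
      = if t = k then (k.factorial : ℝ) else 0 := by
  induction t with
  | zero =>
    intro k
    cases k with
    | zero => simp [fall]
    | succ k => simp [fall_zero_eq]
  | succ t ih =>
    intro k
    cases k with
    | zero =>
      rw [if_neg (by omega)]
      have : ∀ j ∈ range (t+2), (-1:ℝ)^(t+1-j) * ((t+1).choose j) * fall j 0
          = (-1:ℝ)^(t+1-j) * ((t+1).choose j) := by
        intro j _; simp [fall]
      rw [Finset.sum_congr rfl this]
      exact alt_sum_choose (t+1) (by omega)
    | succ k =>
      rw [Finset.sum_range_succ']
      have h0 : (-1:ℝ)^(t+1-0) * ((t+1).choose 0) * fall (0:ℕ) (k+1) = 0 := by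
        norm_num [fall_zero_eq]
      rw [h0, add_zero]
      have hterm : ∀ i ∈ range (t+1),
          (-1:ℝ)^(t+1-(i+1)) * ((t+1).choose (i+1)) * fall (↑(i+1)) (k+1)
          = ((t:ℝ)+1) * ((-1:ℝ)^(t-i) * (t.choose i) * fall i k) := by
        intro i hi
        have h1 : t+1-(i+1) = t-i := by omega
        have h2 : fall (↑(i+1)) (k+1) = ((i:ℝ)+1) * fall i k := by
          push_cast
          exact fall_add_one (i:ℝ) k
        have h3 : (((t+1).choose (i+1) : ℕ) : ℝ) * ((i:ℝ)+1) = ((t:ℝ)+1) * (t.choose i) := by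
          have := Nat.add_one_mul_choose_eq t i
          have : ((t+1) * t.choose i : ℕ) = ((t+1).choose (i+1) * (i+1) : ℕ) := this
          exact_mod_cast (congrArg (fun z : ℕ => (z:ℝ)) this).symm
        rw [h1, h2]
        calc (-1:ℝ)^(t-i) * ((t+1).choose (i+1)) * (((i:ℝ)+1) * fall i k)
            = (-1:ℝ)^(t-i) * ((((t+1).choose (i+1):ℕ):ℝ) * ((i:ℝ)+1)) * fall i k := by ring
          _ = (-1:ℝ)^(t-i) * (((t:ℝ)+1) * (t.choose i)) * fall i k := by rw [h3]
          _ = ((t:ℝ)+1) * ((-1:ℝ)^(t-i) * (t.choose i) * fall i k) := by ring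
      rw [Finset.sum_congr rfl hterm, ← Finset.mul_sum, ih k]
      rcases eq_or_ne t k with h | h
      · subst h
        rw [if_pos rfl, if_pos rfl]
        rw [Nat.factorial_succ]
        push_cast
        ring
      · rw [if_neg h, if_neg (by omega), mul_zero]

noncomputable def Lfun (d : ℕ) (f : ℕ → ℝ) : ℝ :=
  ∑ t ∈ range (d+1), (t.factorial : ℝ)⁻¹ *
    ∑ j ∈ range (t+1), (-1:ℝ)^(t-j) * (t.choose j) * f j

lemma L_fall (d k : ℕ) (hk : k ≤ d) : Lfun d (fun j => fall j k) = 1 := by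
  unfold Lfun
  have : ∀ t ∈ range (d+1), (t.factorial : ℝ)⁻¹ *
      (∑ j ∈ range (t+1), (-1:ℝ)^(t-j) * (t.choose j) * fall j k)
      = if t = k then 1 else 0 := by
    intro t _
    rw [A_eval t k]
    rcases eq_or_ne t k with h | h
    · subst h
      rw [if_pos rfl, if_pos rfl, inv_mul_cancel₀ (by exact_mod_cast t.factorial_ne_zero)]
    · rw [if_neg h, if_neg h, mul_zero]
  rw [Finset.sum_congr rfl this, Finset.sum_ite_eq' (range (d+1)) k (fun _ => (1:ℝ)),
    if_pos (Finset.mem_range.mpr (by omega))]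

lemma L_sum (d : ℕ) (s : Finset ℕ) (g : ℕ → ℕ → ℝ) :
    Lfun d (fun i => ∑ k ∈ s, g k i) = ∑ k ∈ s, Lfun d (fun k' => g k k') := by
  unfold Lfun
  rw [Finset.sum_comm]
  apply Finset.sum_congr rfl
  intro t _
  simp only [Finset.mul_sum]
  rw [Finset.sum_comm]

lemma L_smul (d : ℕ) (c : ℝ) (f : ℕ → ℝ) :
    Lfun d (fun i => c * f i) = c * Lfun d f := by
  unfold Lfun
  rw [Finset.mul_sum]
  apply Finset.sum_congr rfl
  intro t _
  rw [Finset.mul_sum, Finset.mul_sum, Finset.mul_sum]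
  apply Finset.sum_congr rfl
  intro j _
  ring

lemma vandermonde (l : ℝ) (n : ℕ) : ∀ (x a : ℝ),
    degFall l (x+a) n = ∑ j ∈ range (n+1), (n.choose j : ℝ) * degFall l x j * degFall l a (n-j) := by
  induction n with
  | zero => intro x a; simp [degFall]
  | succ n ih =>
    intro x a
    rw [degFall_succ, ih x a, Finset.sum_mul]
    have hterm : ∀ j ∈ range (n+1),
        (n.choose j : ℝ) * degFall l x j * degFall l a (n-j) * (x + a - n*l)
        = (n.choose j : ℝ) * degFall l x (j+1) * degFall l a (n-j)
          + (n.choose j : ℝ) * degFall l x j * degFall l a (n-j+1) := by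
      intro j hj
      have hj' : j ≤ n := Nat.lt_succ_iff.mp (Finset.mem_range.mp hj)
      rw [degFall_succ l x j, degFall_succ l a (n-j)]
      have hc : ((n-j : ℕ) : ℝ) = (n:ℝ) - j := by
        exact Nat.cast_sub hj'
      rw [hc]
      ring
    rw [Finset.sum_congr rfl hterm, Finset.sum_add_distrib]
    have hsecond : ∑ j ∈ range (n+1), (n.choose j : ℝ) * degFall l x j * degFall l a (n-j+1)
        = ∑ j ∈ range (n+1), (n.choose j : ℝ) * degFall l x j * degFall l a (n+1-j) := by
      apply Finset.sum_congr rfl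
      intro j hj
      have hj' : j ≤ n := Nat.lt_succ_iff.mp (Finset.mem_range.mp hj)
      rw [show n - j + 1 = n + 1 - j by omega]
    rw [hsecond]
    rw [Finset.sum_range_succ' (fun j => ((n+1).choose j : ℝ) * degFall l x j * degFall l a (n+1-j)) (n+1)]
    have hsplit : ∀ i ∈ range (n+1),
        (((n+1).choose (i+1) : ℕ) : ℝ) * degFall l x (i+1) * degFall l a (n+1-(i+1))
        = (n.choose i : ℝ) * degFall l x (i+1) * degFall l a (n-i)
          + (n.choose (i+1) : ℝ) * degFall l x (i+1) * degFall l a (n-i) := by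
      intro i hi
      rw [show n+1-(i+1) = n-i by omega, Nat.choose_succ_succ]
      push_cast
      ring
    rw [Finset.sum_congr rfl hsplit, Finset.sum_add_distrib]
    have hS2 : ∑ j ∈ range (n+1), (n.choose j : ℝ) * degFall l x j * degFall l a (n+1-j)
        = (∑ i ∈ range (n+1), (n.choose (i+1) : ℝ) * degFall l x (i+1) * degFall l a (n-i))
          + ((n+1).choose 0 : ℝ) * degFall l x 0 * degFall l a (n+1-0) := by
      have ext : ∑ j ∈ range (n+2), (n.choose j : ℝ) * degFall l x j * degFall l a (n+1-j)
          = ∑ j ∈ range (n+1), (n.choose j : ℝ) * degFall l x j * degFall l a (n+1-j) := by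
        rw [Finset.sum_range_succ, Nat.choose_succ_self]
        norm_num
      rw [← ext, Finset.sum_range_succ' (fun j => (n.choose j : ℝ) * degFall l x j * degFall l a (n+1-j)) (n+1)]
      congr 1
      · apply Finset.sum_congr rfl
        intro i _
        rw [show n+1-(i+1) = n-i by omega]
      · norm_num
    rw [hS2]
    ring

theorem degenerate_Bell_recurrence
    (l : ℝ) (n : ℕ)
    (S2 : ℕ → ℕ → ℝ)
    (hS : ∀ (y : ℝ) (m : ℕ),
      degFall l y m = ∑ k ∈ Finset.range (m + 1), S2 m k * fall y k)
    (Bel : ℕ → ℝ)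
    (hBel : ∀ m : ℕ, Bel m = ∑ k ∈ Finset.range (m + 1), S2 m k) :
    Bel (n + 1) = ((n : ℝ) + 1 - n * l) * Bel n -
      ∑ m ∈ Finset.range n,
        (if m = 0 then (0 : ℝ) else ((n.choose (m - 1) : ℕ) : ℝ)) *
          Bel m * degFall l (l - 1) (n - m + 1) := by
  -- L applied to degFall gives Bel
  have LdegFall : ∀ m : ℕ, m ≤ n+1 → Lfun (n+1) (fun i => degFall l i m) = Bel m := by
    intro m hm
    have hfun : (fun i : ℕ => degFall l (i:ℝ) m)
        = fun i : ℕ => ∑ k ∈ range (m+1), S2 m k * fall (i:ℝ) k := funext fun i => hS i m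
    rw [hfun, L_sum, hBel m]
    apply Finset.sum_congr rfl
    intro k hk
    have hk' : k ≤ n+1 := le_trans (Nat.lt_succ_iff.mp (Finset.mem_range.mp hk)) hm
    rw [L_smul, L_fall (n+1) k hk', mul_one]
  -- pointwise polynomial identity
  have key_poly : ∀ y : ℝ, ∑ j ∈ range (n+1),
      ((n.choose j : ℝ) * degFall l (l-1) (n-j)) * degFall l y (j+1)
      = y * degFall l (y-1) n := by
    intro y
    have h1 : ∀ j ∈ range (n+1),
        ((n.choose j : ℝ) * degFall l (l-1) (n-j)) * degFall l y (j+1)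
        = y * ((n.choose j : ℝ) * degFall l (y-l) j * degFall l (l-1) (n-j)) := by
      intro j _
      rw [degFall_succ']
      ring
    rw [Finset.sum_congr rfl h1, ← Finset.mul_sum, ← vandermonde l n (y-l) (l-1)]
    have : y - l + (l-1) = y - 1 := by ring
    rw [this]
  -- the master identity
  have master : ∑ j ∈ range (n+1), (n.choose j : ℝ) * Bel (j+1) * degFall l (l-1) (n-j)
      = Bel n := by
    have e1 : ∀ j ∈ range (n+1), (n.choose j : ℝ) * Bel (j+1) * degFall l (l-1) (n-j)
        = Lfun (n+1) (fun i => ((n.choose j : ℝ) * degFall l (l-1) (n-j)) * degFall l i (j+1)) := by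
      intro j hj
      have hj' : j + 1 ≤ n + 1 := by
        have := Finset.mem_range.mp hj; omega
      rw [L_smul, LdegFall (j+1) hj']
      ring
    rw [Finset.sum_congr rfl e1, ← L_sum]
    have e2 : (fun i : ℕ => ∑ j ∈ range (n+1),
          ((n.choose j : ℝ) * degFall l (l-1) (n-j)) * degFall l i (j+1))
        = fun i : ℕ => ∑ k ∈ range (n+1), S2 n k * fall (i:ℝ) (k+1) := by
      funext i
      rw [key_poly (i:ℝ), hS ((i:ℝ)-1) n, Finset.mul_sum]
      apply Finset.sum_congr rfl
      intro k _
      rw [fall_succ' (i:ℝ) k]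
      ring
    rw [e2, L_sum]
    have e3 : ∀ k ∈ range (n+1), Lfun (n+1) (fun i => S2 n k * fall (i:ℝ) (k+1)) = S2 n k := by
      intro k hk
      have hk' : k + 1 ≤ n + 1 := by
        have := Finset.mem_range.mp hk; omega
      rw [L_smul, L_fall (n+1) (k+1) hk', mul_one]
    rw [Finset.sum_congr rfl e3, ← hBel n]
  -- final assembly
  cases n with
  | zero =>
    simp [degFall] at master
    simpa using master
  | succ p =>
    rw [Finset.sum_range_succ, Finset.sum_range_succ] at master
    have hb1 : degFall l (l-1) (p+1-p) = l - 1 := by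
      rw [show p+1-p = 1 by omega]
      simp [degFall]
    have hb0 : degFall l (l-1) (p+1-(p+1)) = 1 := by
      rw [show p+1-(p+1) = 0 by omega]
      simp [degFall]
    rw [hb1, hb0, Nat.choose_succ_self_right, Nat.choose_self] at master
    -- rewrite the goal's sum
    have hT : ∑ m ∈ Finset.range (p+1),
        (if m = 0 then (0:ℝ) else (((p+1).choose (m-1) : ℕ) : ℝ)) * Bel m * degFall l (l-1) (p+1-m+1)
        = ∑ i ∈ Finset.range p, ((p+1).choose i : ℝ) * Bel (i+1) * degFall l (l-1) (p+1-i) := by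
      rw [Finset.sum_range_succ' (fun m => (if m = 0 then (0:ℝ) else (((p+1).choose (m-1) : ℕ) : ℝ)) * Bel m * degFall l (l-1) (p+1-m+1)) p]
      have h00 : (if (0:ℕ) = 0 then (0:ℝ) else (((p+1).choose (0-1) : ℕ) : ℝ)) * Bel 0 * degFall l (l-1) (p+1-0+1) = 0 := by
        simp
      rw [h00, add_zero]
      apply Finset.sum_congr rfl
      intro i hi
      have hi' : i < p := Finset.mem_range.mp hi
      rw [if_neg (by omega), show (i+1-1) = i by omega, show p+1-(i+1)+1 = p+1-i by omega]
    rw [hT]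
    push_cast at master ⊢
    linear_combination master
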